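/- For a k-ideal I of a commutative semiring R, the k-radical R_k(I) equals the set T = {r ∈ R : every multiplicatively closed subset of R containing r has nonempty intersection with I}. -/

import Mathlib

/-!
If `r` lies outside the k-radical, some k-prime `P ⊇ I` misses `r`, and then the powers of `r`
form a multiplicatively closed set avoiding `I`, since k-prime ideals are prime. Conversely, if a
multiplicatively closed `S ∋ r` avoids the k-ideal `I`, Zorn's lemma gives a k-ideal `P ⊇ I`
maximal among those avoiding `S`, and `P` is k-prime: for k-ideals `A, B ⊄ P` the k-closures of
`P + A` and `P + B` meet `S`, and since k-closure is submultiplicative, the product of the two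
witnesses lies in the k-closure of `(P + A)(P + B) ⊆ P`, which is `P` again.
-/

variable {R : Type*} [CommSemiring R]

/-- An ideal `I` of a commutative semiring is a *k-ideal* (subtractive ideal) if
`a ∈ I` and `a + b ∈ I` imply `b ∈ I`. -/
def IsKIdeal (I : Ideal R) : Prop :=
  ∀ a b : R, a ∈ I → a + b ∈ I → b ∈ I

/-- A *k-prime* ideal: a proper k-ideal `P` such that for all k-ideals `I`, `J`,
`I * J ≤ P` implies `I ≤ P` or `J ≤ P`. -/
def IsKPrime (P : Ideal R) : Prop :=
  IsKIdeal P ∧ P ≠ ⊤ ∧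
    ∀ I J : Ideal R, IsKIdeal I → IsKIdeal J → I * J ≤ P → I ≤ P ∨ J ≤ P

/-- The *k-radical* of an ideal: the intersection of all k-prime ideals containing it. -/
def kRadical (I : Ideal R) : Ideal R :=
  sInf {P : Ideal R | IsKPrime P ∧ I ≤ P}

/-- The smallest k-ideal containing `J`. -/
def kClosure (J : Ideal R) : Ideal R where
  carrier := {x | ∃ j ∈ J, x + j ∈ J}
  zero_mem' := ⟨0, J.zero_mem, by simp⟩
  add_mem' := by
    rintro x y ⟨j, hj, hxj⟩ ⟨k, hk, hyk⟩
    refine ⟨j + k, J.add_mem hj hk, ?_⟩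
    rw [show x + y + (j + k) = (x + j) + (y + k) by ring]
    exact J.add_mem hxj hyk
  smul_mem' := by
    rintro c x ⟨j, hj, hxj⟩
    refine ⟨c * j, J.mul_mem_left c hj, ?_⟩
    rw [smul_eq_mul, ← mul_add]
    exact J.mul_mem_left c hxj

lemma le_kClosure (J : Ideal R) : J ≤ kClosure J := fun x hx => ⟨x, hx, J.add_mem hx hx⟩

lemma isKIdeal_kClosure (J : Ideal R) : IsKIdeal (kClosure J) := by
  rintro a b ⟨j, hj, haj⟩ ⟨k, hk, habk⟩
  refine ⟨a + j + k, J.add_mem haj hk, ?_⟩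
  rw [show b + (a + j + k) = (a + b + k) + j by ring]
  exact J.add_mem habk hj

lemma kClosure_le {J P : Ideal R} (hP : IsKIdeal P) (h : J ≤ P) : kClosure J ≤ P := by
  rintro x ⟨j, hj, hxj⟩
  exact hP j x (h hj) (by rw [add_comm]; exact h hxj)

lemma kClosure_mul_le (J K : Ideal R) : kClosure J * kClosure K ≤ kClosure (J * K) := by
  rw [Ideal.mul_le]
  rintro u ⟨j, hj, huj⟩ v ⟨k, hk, hvk⟩
  have hjv : j * v ∈ kClosure (J * K) := by
    refine ⟨j * k, Ideal.mul_mem_mul hj hk, ?_⟩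
    rw [← mul_add]
    exact Ideal.mul_mem_mul hj hvk
  have hsum : j * v + (u + j) * k ∈ kClosure (J * K) :=
    (kClosure _).add_mem hjv (le_kClosure _ (Ideal.mul_mem_mul huj hk))
  -- `(u + j)(v + k) = (j v + (u + j) k) + u v`, and the k-closure is subtractive.
  refine isKIdeal_kClosure _ _ _ hsum ?_
  rw [show j * v + (u + j) * k + u * v = (u + j) * (v + k) by ring]
  exact le_kClosure _ (Ideal.mul_mem_mul huj hvk)

lemma IsKPrime.isPrime {P : Ideal R} (hP : IsKPrime P) : P.IsPrime := by
  refine ⟨hP.2.1, fun {x y} hxy => ?_⟩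
  have hprod : kClosure (Ideal.span {x}) * kClosure (Ideal.span {y}) ≤ P := by
    refine (kClosure_mul_le _ _).trans (kClosure_le hP.1 ?_)
    rwa [Ideal.span_singleton_mul_span_singleton, Ideal.span_singleton_le_iff_mem]
  exact (hP.2.2 _ _ (isKIdeal_kClosure _) (isKIdeal_kClosure _) hprod).imp
    (fun h => h (le_kClosure _ (Ideal.mem_span_singleton_self x)))
    (fun h => h (le_kClosure _ (Ideal.mem_span_singleton_self y)))

lemma isKIdeal_sSup_of_isChain {c : Set (Ideal R)} (hne : c.Nonempty)
    (hc : IsChain (· ≤ ·) c) (hk : ∀ J ∈ c, IsKIdeal J) : IsKIdeal (sSup c) := by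
  intro a b ha hab
  rw [Submodule.mem_sSup_of_directed hne hc.directedOn] at ha hab ⊢
  obtain ⟨J₁, hJ₁, ha⟩ := ha
  obtain ⟨J₂, hJ₂, hab⟩ := hab
  rcases hc.total hJ₁ hJ₂ with h | h
  · exact ⟨J₂, hJ₂, hk J₂ hJ₂ a b (h ha) hab⟩
  · exact ⟨J₁, hJ₁, hk J₁ hJ₁ a b ha (h hab)⟩

lemma exists_le_maximal_kIdeal_disjoint {I : Ideal R} (hI : IsKIdeal I) {S : Set R}
    (hIS : Disjoint (I : Set R) S) :
    ∃ P, I ≤ P ∧ Maximal (fun J : Ideal R => IsKIdeal J ∧ Disjoint (J : Set R) S) P := by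
  refine zorn_le_nonempty₀ {J | IsKIdeal J ∧ Disjoint (J : Set R) S}
    (fun c hcF hc J hJ => ⟨sSup c, ⟨?_, ?_⟩, fun _ => le_sSup⟩) I ⟨hI, hIS⟩
  · exact isKIdeal_sSup_of_isChain ⟨J, hJ⟩ hc fun K hK => (hcF hK).1
  · refine Set.disjoint_left.2 fun x hx => ?_
    obtain ⟨K, hK, hxK⟩ := (Submodule.mem_sSup_of_directed ⟨J, hJ⟩ hc.directedOn).1 hx
    exact Set.disjoint_left.1 (hcF hK).2 hxK

lemma isKPrime_of_maximal_disjoint {S : Set R} (hS : ∀ a ∈ S, ∀ b ∈ S, a * b ∈ S)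
    (hSne : S.Nonempty) {P : Ideal R}
    (hP : Maximal (fun J : Ideal R => IsKIdeal J ∧ Disjoint (J : Set R) S) P) :
    IsKPrime P := by
  obtain ⟨hPk, hPS⟩ := hP.prop
  have meets : ∀ C : Ideal R, ¬C ≤ P → ∃ s ∈ S, s ∈ kClosure (P ⊔ C) := by
    intro C hCP
    by_contra! h
    have hle := hP.2 ⟨isKIdeal_kClosure _, Set.disjoint_right.2 h⟩
      (le_sup_left.trans (le_kClosure _))
    exact hCP ((le_sup_right.trans (le_kClosure _)).trans hle)
  refine ⟨hPk, fun htop => ?_, fun A B _ _ hAB => ?_⟩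
  · obtain ⟨s, hs⟩ := hSne
    exact Set.disjoint_right.1 hPS hs (htop ▸ Submodule.mem_top)
  · by_contra! h
    obtain ⟨s₁, hs₁, hs₁P⟩ := meets A h.1
    obtain ⟨s₂, hs₂, hs₂P⟩ := meets B h.2
    have hprod : (P ⊔ A) * (P ⊔ B) ≤ P := by
      rw [Ideal.sup_mul, Ideal.mul_sup, Ideal.mul_sup]
      exact sup_le (sup_le Ideal.mul_le_right Ideal.mul_le_left) (sup_le Ideal.mul_le_right hAB)
    exact Set.disjoint_right.1 hPS (hS _ hs₁ _ hs₂)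
      (kClosure_le hPk hprod (kClosure_mul_le _ _ (Ideal.mul_mem_mul hs₁P hs₂P)))

/-- The k-radical of a k-ideal `I` equals the set of all `r` such that every
multiplicatively closed subset of `R` containing `r` meets `I`. -/
theorem kRadical_eq_T (I : Ideal R) (hI : IsKIdeal I) :
    (kRadical I : Set R) =
      {r : R | ∀ S : Set R, (∀ a ∈ S, ∀ b ∈ S, a * b ∈ S) → r ∈ S →
        (S ∩ (I : Set R)).Nonempty} := by
  ext r
  refine ⟨fun hr S hS hrS => ?_, fun hr => Ideal.mem_sInf.2 fun P ⟨hP, hIP⟩ => ?_⟩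
  · by_contra hSI
    rw [← Set.not_disjoint_iff_nonempty_inter, not_not] at hSI
    obtain ⟨P, hIP, hPmax⟩ := exists_le_maximal_kIdeal_disjoint hI hSI.symm
    have hrP : r ∈ P := Ideal.mem_sInf.1 hr ⟨isKPrime_of_maximal_disjoint hS ⟨r, hrS⟩ hPmax, hIP⟩
    exact Set.disjoint_left.1 hPmax.prop.2 hrP hrS
  · obtain ⟨x, ⟨n, rfl⟩, hxI⟩ := hr (Submonoid.powers r)
      (fun _ ha _ hb => (Submonoid.powers r).mul_mem ha hb) (Submonoid.mem_powers r)
    exact hP.isPrime.mem_of_pow_mem n (hIP hxI)
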